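/- Suppose f is C⁴ on a neighbourhood of x(0), x is four times differentiable at 0 along the pathway, the natural pathway equation f(x(t)) = (1−t) • f(x(0)) holds for all t ∈ [0,1], and J := f′(x(0)) is a continuous linear isomorphism from E onto F. Fix ε ∈ ℝ and define c_n := (εⁿ/n!) • x⁽ⁿ⁾(0). Then f⁽⁴⁾(x(0))[c₁,c₁,c₁,c₁] + 12 • f⁽³⁾(x(0))[c₁,c₁,c₂] + 24 • f″(x(0))[c₁,c₃] + 12 • f″(x(0))[c₂,c₂] + 24 • J(c₄) = 0, and hence c₄ = −(1/24) • J⁻¹( f⁽⁴⁾(x(0))[c₁,c₁,c₁,c₁] + 12 • f⁽³⁾(x(0))[c₁,c₁,c₂] + 24 • f″(x(0))[c₁,c₃] + 12 • f″(x(0))[c₂,c₂] ). -/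

import Mathlib

/-!
Along the pathway, `g := f ∘ x` is affine on `[0, 1]`, so its one-sided derivatives of order
`2, 3, 4` vanish at `0`. Differentiating `g' = f'(x)[x']` three times by the chain rule, and
symmetrising with the symmetry of `f''` and `f'''`, gives
`g⁗(0) = f⁗[x',x',x',x'] + 6 f'''[x',x',x''] + 4 f''[x',x'''] + 3 f''[x'',x''] + f'[x'''']`.
Multiplying by `ε⁴` turns this into the identity for the `c_n`, and applying `J⁻¹` solves it
for `c₄`. Since `x` is only differentiable near `0`, every intermediate identity holds only
eventually in `𝓝[≥] 0`, and each differentiation step uses uniqueness of one-sided derivatives.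
-/

open Topology Filter Set

section

variable {E F : Type*} [NormedAddCommGroup E] [NormedSpace ℝ E]
  [NormedAddCommGroup F] [NormedSpace ℝ F]

theorem HasDerivWithinAt.eq_of_eventuallyEq {S : Set ℝ} {a : ℝ} {g h : ℝ → F} {g' h' : F}
    (hg : HasDerivWithinAt g g' S a) (hh : HasDerivWithinAt h h' S a) (hgh : g =ᶠ[𝓝[S] a] h)
    (ha : a ∈ S) (hS : UniqueDiffWithinAt ℝ S a) : g' = h' :=
  hS.eq_deriv S (hg.congr_of_eventuallyEq hgh.symm (hgh.eq_of_nhdsWithin ha).symm) hh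

theorem eventuallyEq_of_hasDerivWithinAt {S : Set ℝ} {a : ℝ} {g h g' h' : ℝ → F}
    (hg : ∀ᶠ s in 𝓝[S] a, HasDerivWithinAt g (g' s) S s)
    (hh : ∀ᶠ s in 𝓝[S] a, HasDerivWithinAt h (h' s) S s) (hgh : g =ᶠ[𝓝[S] a] h)
    (hS : UniqueDiffOn ℝ S) : g' =ᶠ[𝓝[S] a] h' := by
  filter_upwards [hg, hh, eventually_eventually_nhdsWithin.2 hgh, self_mem_nhdsWithin]
    with s hgs hhs hghs hs
  exact hgs.eq_of_eventuallyEq hhs hghs hs (hS s hs)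

theorem DifferentiableWithinAt.hasDerivWithinAt_iteratedDerivWithin {x : ℝ → E} {S : Set ℝ}
    {s : ℝ} {n : ℕ} (h : DifferentiableWithinAt ℝ (iteratedDerivWithin n x S) S s) :
    HasDerivWithinAt (iteratedDerivWithin n x S) (iteratedDerivWithin (n + 1) x S s) S s := by
  rw [iteratedDerivWithin_succ]
  exact h.hasDerivWithinAt

theorem iteratedFDeriv_three_apply (f : E → F) (z : E) (m : Fin 3 → E) :
    iteratedFDeriv ℝ 3 f z m = fderiv ℝ (fderiv ℝ (fderiv ℝ f)) z (m 0) (m 1) (m 2) := by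
  rw [iteratedFDeriv_succ_apply_right, iteratedFDeriv_two_apply]
  rfl

theorem iteratedFDeriv_four_apply (f : E → F) (z : E) (m : Fin 4 → E) :
    iteratedFDeriv ℝ 4 f z m
      = fderiv ℝ (fderiv ℝ (fderiv ℝ (fderiv ℝ f))) z (m 0) (m 1) (m 2) (m 3) := by
  rw [iteratedFDeriv_succ_apply_right, iteratedFDeriv_three_apply]
  rfl

theorem ContDiffAt.hasFDerivAt_fderiv {G : Type*} [NormedAddCommGroup G] [NormedSpace ℝ G]
    {g : E → G} {p : E} {n : WithTop ℕ∞} (hg : ContDiffAt ℝ n g p) (hn : 2 ≤ n) :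
    HasFDerivAt (fderiv ℝ g) (fderiv ℝ (fderiv ℝ g) p) p :=
  ((hg.fderiv_right (m := 1) hn).differentiableAt one_ne_zero).hasFDerivAt

section ThirdDerivativeSymmetry

variable {f : E → F} {p : E}

theorem ContDiffAt.fderiv_fderiv_fderiv_apply_comm₁₂ (hf : ContDiffAt ℝ 3 f p) (u v w : E) :
    fderiv ℝ (fderiv ℝ (fderiv ℝ f)) p u v w = fderiv ℝ (fderiv ℝ (fderiv ℝ f)) p v u w := by
  rw [(hf.fderiv_right (m := 2) le_rfl).isSymmSndFDerivAt (by norm_num) u v]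

theorem ContDiffAt.fderiv_fderiv_fderiv_apply_comm₂₃ (hf : ContDiffAt ℝ 3 f p) (u v w : E) :
    fderiv ℝ (fderiv ℝ (fderiv ℝ f)) p u v w = fderiv ℝ (fderiv ℝ (fderiv ℝ f)) p u w v := by
  have happly (v w : E) := ((hf.fderiv_right (m := 2) (by norm_num)).hasFDerivAt_fderiv le_rfl
    |>.clm_apply (hasFDerivAt_const v p)).clm_apply (hasFDerivAt_const w p)
  have hsymm : (fun z => fderiv ℝ (fderiv ℝ f) z v w) =ᶠ[𝓝 p]
      fun z => fderiv ℝ (fderiv ℝ f) z w v := by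
    filter_upwards [hf.eventually (by simp)] with z hz
    exact hz.isSymmSndFDerivAt (by norm_num) v w
  simpa using congr($((happly v w).unique ((happly w v).congr_of_eventuallyEq hsymm)) u)

end ThirdDerivativeSymmetry

section Pathway

variable {f : E → F} {x x₁ x₂ x₃ : ℝ → E} {S : Set ℝ} {a : ℝ}

theorem eventually_fderiv_apply_eq_of_affine {b w : F} (hS : UniqueDiffOn ℝ S)
    (hf : ∀ᶠ s in 𝓝[S] a, DifferentiableAt ℝ f (x s))
    (hx₁ : ∀ᶠ s in 𝓝[S] a, HasDerivWithinAt x (x₁ s) S s)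
    (haff : ∀ᶠ s in 𝓝[S] a, f (x s) = b + s • w) :
    ∀ᶠ s in 𝓝[S] a, fderiv ℝ f (x s) (x₁ s) = w := by
  have hline (s : ℝ) : HasDerivWithinAt (fun t : ℝ => b + t • w) w S s := by
    simpa using ((hasDerivWithinAt_id s S).smul_const w).const_add b
  refine eventuallyEq_of_hasDerivWithinAt (g := f ∘ x) ?_ (.of_forall hline) haff hS
  filter_upwards [hf, hx₁] with s hfs h₁
  exact hfs.hasFDerivAt.comp_hasDerivWithinAt s h₁

-- `faaDiBruno_k` names the Faà di Bruno expansion of `(f ∘ x)⁽ᵏ⁾`, with `xⱼ` standing for `x⁽ʲ⁾`.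
theorem eventually_faaDiBruno_two_eq_zero {w : F} (hS : UniqueDiffOn ℝ S)
    (hf : ∀ᶠ s in 𝓝[S] a, ContDiffAt ℝ 2 f (x s))
    (hx₁ : ∀ᶠ s in 𝓝[S] a, HasDerivWithinAt x (x₁ s) S s)
    (hx₂ : ∀ᶠ s in 𝓝[S] a, HasDerivWithinAt x₁ (x₂ s) S s)
    (h₁ : ∀ᶠ s in 𝓝[S] a, fderiv ℝ f (x s) (x₁ s) = w) :
    ∀ᶠ s in 𝓝[S] a, iteratedFDeriv ℝ 2 f (x s) ![x₁ s, x₁ s] + fderiv ℝ f (x s) (x₂ s) = 0 := by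
  have hG : ∀ᶠ s in 𝓝[S] a, HasDerivWithinAt (fun t => fderiv ℝ f (x t) (x₁ t))
      (fderiv ℝ (fderiv ℝ f) (x s) (x₁ s) (x₁ s) + fderiv ℝ f (x s) (x₂ s)) S s := by
    filter_upwards [hf, hx₁, hx₂] with s hfs h₁ h₂
    exact ((hfs.hasFDerivAt_fderiv le_rfl).comp_hasDerivWithinAt s h₁).clm_apply h₂
  filter_upwards [eventuallyEq_of_hasDerivWithinAt hG
    (.of_forall fun s => hasDerivWithinAt_const s S w) h₁ hS] with s hs
  simpa [iteratedFDeriv_two_apply] using hs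

theorem eventually_faaDiBruno_three_eq_zero (hS : UniqueDiffOn ℝ S)
    (hf : ∀ᶠ s in 𝓝[S] a, ContDiffAt ℝ 3 f (x s))
    (hx₁ : ∀ᶠ s in 𝓝[S] a, HasDerivWithinAt x (x₁ s) S s)
    (hx₂ : ∀ᶠ s in 𝓝[S] a, HasDerivWithinAt x₁ (x₂ s) S s)
    (hx₃ : ∀ᶠ s in 𝓝[S] a, HasDerivWithinAt x₂ (x₃ s) S s)
    (h₂ : ∀ᶠ s in 𝓝[S] a,
      iteratedFDeriv ℝ 2 f (x s) ![x₁ s, x₁ s] + fderiv ℝ f (x s) (x₂ s) = 0) :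
    ∀ᶠ s in 𝓝[S] a, iteratedFDeriv ℝ 3 f (x s) ![x₁ s, x₁ s, x₁ s]
      + (3 : ℝ) • iteratedFDeriv ℝ 2 f (x s) ![x₁ s, x₂ s] + fderiv ℝ f (x s) (x₃ s) = 0 := by
  have hG := (hf.and (hx₁.and (hx₂.and hx₃))).mono fun s ⟨hfs, h₁, h₂, h₃⟩ =>
    ((((hfs.fderiv_right (m := 2) le_rfl).hasFDerivAt_fderiv le_rfl).comp_hasDerivWithinAt s h₁
      |>.clm_apply h₂).clm_apply h₂).add
      (((hfs.hasFDerivAt_fderiv (by norm_num)).comp_hasDerivWithinAt s h₁).clm_apply h₃)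
  filter_upwards [eventuallyEq_of_hasDerivWithinAt hG
    (.of_forall fun s => hasDerivWithinAt_const s S (0 : F))
    (h₂.mono fun s hs => by simpa [iteratedFDeriv_two_apply] using hs) hS, hf] with s hs hfs
  simp only [Function.comp_apply, add_apply, iteratedFDeriv_three_apply, iteratedFDeriv_two_apply,
    Matrix.cons_val_zero, Matrix.cons_val_one, Matrix.cons_val] at hs ⊢
  rw [(hfs.isSymmSndFDerivAt (by norm_num)).eq (x₂ s)] at hs
  linear_combination (norm := module) hs

theorem faaDiBruno_four_eq_zero {x₄ : E} (ha : a ∈ S) (hS : UniqueDiffWithinAt ℝ S a)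
    (hf : ContDiffAt ℝ 4 f (x a))
    (hx₁ : HasDerivWithinAt x (x₁ a) S a) (hx₂ : HasDerivWithinAt x₁ (x₂ a) S a)
    (hx₃ : HasDerivWithinAt x₂ (x₃ a) S a) (hx₄ : HasDerivWithinAt x₃ x₄ S a)
    (h₃ : ∀ᶠ s in 𝓝[S] a, iteratedFDeriv ℝ 3 f (x s) ![x₁ s, x₁ s, x₁ s]
      + (3 : ℝ) • iteratedFDeriv ℝ 2 f (x s) ![x₁ s, x₂ s] + fderiv ℝ f (x s) (x₃ s) = 0) :
    iteratedFDeriv ℝ 4 f (x a) ![x₁ a, x₁ a, x₁ a, x₁ a]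
      + (6 : ℝ) • iteratedFDeriv ℝ 3 f (x a) ![x₁ a, x₁ a, x₂ a]
      + (4 : ℝ) • iteratedFDeriv ℝ 2 f (x a) ![x₁ a, x₃ a]
      + (3 : ℝ) • iteratedFDeriv ℝ 2 f (x a) ![x₂ a, x₂ a] + fderiv ℝ f (x a) x₄ = 0 := by
  have hf₁ := hf.fderiv_right (m := 3) le_rfl
  have hf₂ := hf₁.fderiv_right (m := 2) le_rfl
  have hG := (((((hf₂.hasFDerivAt_fderiv le_rfl).comp_hasDerivWithinAt a hx₁).clm_apply hx₂
      |>.clm_apply hx₂).clm_apply hx₂).add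
    ((((hf₁.hasFDerivAt_fderiv (by norm_num)).comp_hasDerivWithinAt a hx₁).clm_apply hx₂
      |>.clm_apply hx₃).const_smul (3 : ℝ))).add
    (((hf.hasFDerivAt_fderiv (by norm_num)).comp_hasDerivWithinAt a hx₁).clm_apply hx₄)
  have hG₀ := hG.eq_of_eventuallyEq (hasDerivWithinAt_const a S (0 : F))
    (h₃.mono fun s hs => by simpa [iteratedFDeriv_three_apply, iteratedFDeriv_two_apply] using hs)
    ha hS
  have hf₃ : ContDiffAt ℝ 3 f (x a) := hf.of_le (by norm_num)
  simp only [Function.comp_apply, add_apply, iteratedFDeriv_four_apply, iteratedFDeriv_three_apply,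
    iteratedFDeriv_two_apply, Matrix.cons_val_zero, Matrix.cons_val_one, Matrix.cons_val]
    at hG₀ ⊢
  rw [hf₃.fderiv_fderiv_fderiv_apply_comm₁₂ (x₂ a),
    hf₃.fderiv_fderiv_fderiv_apply_comm₂₃ (x₁ a) (x₂ a)] at hG₀
  linear_combination (norm := module) hG₀

theorem faaDiBruno_four_eq_zero_of_affine {x₄ : E} {b w : F} (hS : UniqueDiffOn ℝ S) (ha : a ∈ S)
    (hf : ContDiffAt ℝ 4 f (x a))
    (hx₁ : ∀ᶠ s in 𝓝[S] a, HasDerivWithinAt x (x₁ s) S s)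
    (hx₂ : ∀ᶠ s in 𝓝[S] a, HasDerivWithinAt x₁ (x₂ s) S s)
    (hx₃ : ∀ᶠ s in 𝓝[S] a, HasDerivWithinAt x₂ (x₃ s) S s) (hx₄ : HasDerivWithinAt x₃ x₄ S a)
    (haff : ∀ᶠ s in 𝓝[S] a, f (x s) = b + s • w) :
    iteratedFDeriv ℝ 4 f (x a) ![x₁ a, x₁ a, x₁ a, x₁ a]
      + (6 : ℝ) • iteratedFDeriv ℝ 3 f (x a) ![x₁ a, x₁ a, x₂ a]
      + (4 : ℝ) • iteratedFDeriv ℝ 2 f (x a) ![x₁ a, x₃ a]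
      + (3 : ℝ) • iteratedFDeriv ℝ 2 f (x a) ![x₂ a, x₂ a] + fderiv ℝ f (x a) x₄ = 0 := by
  have hf' : ∀ᶠ s in 𝓝[S] a, ContDiffAt ℝ 4 f (x s) :=
    (hx₁.self_of_nhdsWithin ha).continuousWithinAt.eventually (hf.eventually (by simp))
  have h₁ := eventually_fderiv_apply_eq_of_affine hS
    (hf'.mono fun s hs => hs.differentiableAt (by simp)) hx₁ haff
  have h₂ := eventually_faaDiBruno_two_eq_zero hS
    (hf'.mono fun s hs => hs.of_le (by norm_num)) hx₁ hx₂ h₁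
  have h₃ := eventually_faaDiBruno_three_eq_zero hS
    (hf'.mono fun s hs => hs.of_le (by norm_num)) hx₁ hx₂ hx₃ h₂
  exact faaDiBruno_four_eq_zero ha (hS a ha) hf (hx₁.self_of_nhdsWithin ha)
    (hx₂.self_of_nhdsWithin ha) (hx₃.self_of_nhdsWithin ha) hx₄ h₃

end Pathway

end

theorem correction_fourth_order_general
    {E F : Type*} [NormedAddCommGroup E] [NormedSpace ℝ E]
    [NormedAddCommGroup F] [NormedSpace ℝ F]
    (f : E → F) (x : ℝ → E)
    (hf : ContDiffAt ℝ 4 f (x 0))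
    (hx1 : ∀ᶠ s in 𝓝[≥] (0 : ℝ), DifferentiableWithinAt ℝ x (Set.Ici 0) s)
    (hx2 : ∀ᶠ s in 𝓝[≥] (0 : ℝ),
      DifferentiableWithinAt ℝ (iteratedDerivWithin 1 x (Set.Ici 0)) (Set.Ici 0) s)
    (hx3 : ∀ᶠ s in 𝓝[≥] (0 : ℝ),
      DifferentiableWithinAt ℝ (iteratedDerivWithin 2 x (Set.Ici 0)) (Set.Ici 0) s)
    (hx4 : DifferentiableWithinAt ℝ (iteratedDerivWithin 3 x (Set.Ici 0)) (Set.Ici 0) 0)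
    (hpath : ∀ t ∈ Set.Icc (0 : ℝ) 1, f (x t) = (1 - t) • f (x 0))
    (J : E ≃L[ℝ] F) (hJ : (J : E →L[ℝ] F) = fderiv ℝ f (x 0))
    (ε : ℝ) (c₁ c₂ c₃ c₄ : E)
    (hc₁ : c₁ = ε • derivWithin x (Set.Ici 0) 0)
    (hc₂ : c₂ = (ε ^ 2 / 2) • iteratedDerivWithin 2 x (Set.Ici 0) 0)
    (hc₃ : c₃ = (ε ^ 3 / 6) • iteratedDerivWithin 3 x (Set.Ici 0) 0)
    (hc₄ : c₄ = (ε ^ 4 / 24) • iteratedDerivWithin 4 x (Set.Ici 0) 0) :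
    iteratedFDeriv ℝ 4 f (x 0) ![c₁, c₁, c₁, c₁]
      + (12 : ℝ) • iteratedFDeriv ℝ 3 f (x 0) ![c₁, c₁, c₂]
      + (24 : ℝ) • iteratedFDeriv ℝ 2 f (x 0) ![c₁, c₃]
      + (12 : ℝ) • iteratedFDeriv ℝ 2 f (x 0) ![c₂, c₂]
      + (24 : ℝ) • J c₄ = 0 ∧
    c₄ = -(1 / 24 : ℝ) • J.symm (iteratedFDeriv ℝ 4 f (x 0) ![c₁, c₁, c₁, c₁]
      + (12 : ℝ) • iteratedFDeriv ℝ 3 f (x 0) ![c₁, c₁, c₂]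
      + (24 : ℝ) • iteratedFDeriv ℝ 2 f (x 0) ![c₁, c₃]
      + (12 : ℝ) • iteratedFDeriv ℝ 2 f (x 0) ![c₂, c₂]) := by
  have haff : ∀ᶠ s in 𝓝[≥] (0 : ℝ), f (x s) = f (x 0) + s • -f (x 0) := by
    filter_upwards [Icc_mem_nhdsGE one_pos] with s hs
    rw [hpath s hs]
    module
  have key := faaDiBruno_four_eq_zero_of_affine (uniqueDiffOn_Ici 0) self_mem_Ici hf
    (hx1.mono fun s hs => by rw [iteratedDerivWithin_one]; exact hs.hasDerivWithinAt)
    (hx2.mono fun s hs => hs.hasDerivWithinAt_iteratedDerivWithin)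
    (hx3.mono fun s hs => hs.hasDerivWithinAt_iteratedDerivWithin)
    hx4.hasDerivWithinAt_iteratedDerivWithin haff
  have hsum : iteratedFDeriv ℝ 4 f (x 0) ![c₁, c₁, c₁, c₁]
      + (12 : ℝ) • iteratedFDeriv ℝ 3 f (x 0) ![c₁, c₁, c₂]
      + (24 : ℝ) • iteratedFDeriv ℝ 2 f (x 0) ![c₁, c₃]
      + (12 : ℝ) • iteratedFDeriv ℝ 2 f (x 0) ![c₂, c₂]
      + (24 : ℝ) • J c₄ = 0 := by
    rw [← iteratedDerivWithin_one] at hc₁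
    rw [← ContinuousLinearEquiv.coe_coe J, hJ, hc₁, hc₂, hc₃, hc₄]
    simp only [iteratedFDeriv_four_apply, iteratedFDeriv_three_apply, iteratedFDeriv_two_apply,
      Matrix.cons_val_zero, Matrix.cons_val_one, Matrix.cons_val, map_smul, smul_apply] at key ⊢
    linear_combination (norm := module) ε ^ 4 • key
  refine ⟨hsum, J.injective ?_⟩
  rw [map_smul, J.apply_symm_apply]
  linear_combination (norm := module) (1 / 24 : ℝ) • hsum

/-- Finite-step correction identity at fourth order: with
`c_n := (εⁿ/n!) • x⁽ⁿ⁾(0)` (derivatives taken along the pathway),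
`f⁽⁴⁾[c₁,c₁,c₁,c₁] + 12 • f⁽³⁾[c₁,c₁,c₂] + 24 • f″[c₁,c₃] + 12 • f″[c₂,c₂] + 24 • J c₄ = 0`,
hence `c₄ = -(1/24) • J⁻¹ (…)`. -/
theorem correction_fourth_order
    {E F : Type*} [NormedAddCommGroup E] [NormedSpace ℝ E] [CompleteSpace E]
    [NormedAddCommGroup F] [NormedSpace ℝ F] [CompleteSpace F]
    (f : E → F) (x : ℝ → E)
    (hf : ContDiffAt ℝ 4 f (x 0))
    (hx1 : ∀ᶠ s in 𝓝[≥] (0 : ℝ), DifferentiableWithinAt ℝ x (Set.Ici 0) s)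
    (hx2 : ∀ᶠ s in 𝓝[≥] (0 : ℝ),
      DifferentiableWithinAt ℝ (iteratedDerivWithin 1 x (Set.Ici 0)) (Set.Ici 0) s)
    (hx3 : ∀ᶠ s in 𝓝[≥] (0 : ℝ),
      DifferentiableWithinAt ℝ (iteratedDerivWithin 2 x (Set.Ici 0)) (Set.Ici 0) s)
    (hx4 : DifferentiableWithinAt ℝ (iteratedDerivWithin 3 x (Set.Ici 0)) (Set.Ici 0) 0)
    (hpath : ∀ t ∈ Set.Icc (0 : ℝ) 1, f (x t) = (1 - t) • f (x 0))
    (J : E ≃L[ℝ] F) (hJ : (J : E →L[ℝ] F) = fderiv ℝ f (x 0))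
    (ε : ℝ) (c₁ c₂ c₃ c₄ : E)
    (hc₁ : c₁ = ε • derivWithin x (Set.Ici 0) 0)
    (hc₂ : c₂ = (ε ^ 2 / 2) • iteratedDerivWithin 2 x (Set.Ici 0) 0)
    (hc₃ : c₃ = (ε ^ 3 / 6) • iteratedDerivWithin 3 x (Set.Ici 0) 0)
    (hc₄ : c₄ = (ε ^ 4 / 24) • iteratedDerivWithin 4 x (Set.Ici 0) 0) :
    iteratedFDeriv ℝ 4 f (x 0) ![c₁, c₁, c₁, c₁]
      + (12 : ℝ) • iteratedFDeriv ℝ 3 f (x 0) ![c₁, c₁, c₂]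
      + (24 : ℝ) • iteratedFDeriv ℝ 2 f (x 0) ![c₁, c₃]
      + (12 : ℝ) • iteratedFDeriv ℝ 2 f (x 0) ![c₂, c₂]
      + (24 : ℝ) • J c₄ = 0 ∧
    c₄ = -(1 / 24 : ℝ) • J.symm (iteratedFDeriv ℝ 4 f (x 0) ![c₁, c₁, c₁, c₁]
      + (12 : ℝ) • iteratedFDeriv ℝ 3 f (x 0) ![c₁, c₁, c₂]
      + (24 : ℝ) • iteratedFDeriv ℝ 2 f (x 0) ![c₁, c₃]
      + (12 : ℝ) • iteratedFDeriv ℝ 2 f (x 0) ![c₂, c₂]) :=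
  correction_fourth_order_general f x hf hx1 hx2 hx3 hx4 hpath J hJ ε c₁ c₂ c₃ c₄ hc₁ hc₂ hc₃ hc₄
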